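/- arXiv:2506.18207 — 5 statements merged into one kernel-verified Lean document; each statement's English description precedes it below -/
import Mathlib

section
/- Let ξ = (ξ₀, ξ₁, ξ₂, …) be an element of T₀((V)) (i.e., ξ₀ = 0) such that the power series Σₙ ‖ξₙ‖ zⁿ has infinite radius of convergence, and let g₁, g₂ ∈ T₁((V)) be tensor series satisfying factorial decay estimates ‖πₙ(gᵢ)‖ ≤ C·ω^{n/p}/(n/p)! for some constants C, ω > 0, p ≥ 1 and all n ≥ 1. Then the tensor series g₁ ⊗ ξ ⊗ g₂ also has infinite radius of convergence, i.e. limsup_{n→∞} ‖πₙ(g₁ ⊗ ξ ⊗ g₂)‖^{1/n} = 0. -/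
open scoped TensorProduct

noncomputable section

variable (V : Type*) [NormedAddCommGroup V] [NormedSpace ℝ V]

/-- The `n`-th tensor power `V^⊗n`. -/
abbrev TComp (n : ℕ) := ⨂[ℝ] (_ : Fin n), V

/-- Formal tensor series `T((V)) = Π_{n≥0} V^⊗n`. -/
def TSeries := ∀ n : ℕ, TComp V n

variable {V}

/-- The projective tensor (semi)norm on `V^⊗n`. -/
def tnorm {n : ℕ} (x : TComp V n) : ℝ := PiTensorProduct.projectiveSeminorm x

/-- Multiplication `V^⊗k ⊗ V^⊗m → V^⊗(k+m)`. -/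
def mulComp {k m : ℕ} (x : TComp V k) (y : TComp V m) : TComp V (k + m) :=
  (PiTensorProduct.reindex ℝ (fun _ => V) finSumFinEquiv)
    ((PiTensorProduct.tmulEquiv ℝ V) (x ⊗ₜ[ℝ] y))

/-- Degree cast `V^⊗k ≃ V^⊗m` for `k = m`. -/
def castComp {k m : ℕ} (h : k = m) (x : TComp V k) : TComp V m :=
  (PiTensorProduct.reindex ℝ (fun _ => V) (finCongr h)) x

/-- The empty tensor product, i.e. the unit `1 ∈ V^⊗0`. -/
def oneComp : TComp V 0 := PiTensorProduct.tprod ℝ (fun i : Fin 0 => i.elim0)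

/-- The product of tensor series: `(ξ ⊗ η)_n = Σ_{k=0}^{n} ξ_k ⊗ η_{n−k}`. -/
def seriesMul (ξ η : TSeries V) : TSeries V := fun n =>
  ∑ k ∈ (Finset.range (n + 1)).attach,
    castComp (by have := Finset.mem_range.mp k.2; omega)
      (mulComp (ξ k.1) (η (n - k.1)))

/-! With `P_ξ(z) = Σ ‖ξₙ‖ zⁿ`, submultiplicativity of the projective norm bounds `P_{ξ⊗η}`
coefficientwise by the Cauchy product `P_ξ · P_η`, so having infinite radius is stable under
products. The factorial decay makes `P_{gᵢ}` entire: for `n ≥ q := ⌈p⌉` one has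
`Γ(n/p + 1) ≥ (n / q)!`, which dominates `P_{gᵢ}(z)` by a multiple of an exponential series.
Finally, if `Σ aₙ zⁿ` converges for every `z`, then `aₙ < z⁻ⁿ` eventually, so `aₙ^{1/n} → 0`. -/

open PiTensorProduct

theorem PiTensorProduct.norm_map_le_of_norm_map_tprod_le {ι 𝕜 G : Type*} [Fintype ι]
    [NontriviallyNormedField 𝕜] {E : ι → Type*} [∀ i, SeminormedAddCommGroup (E i)]
    [∀ i, NormedSpace 𝕜 (E i)] [SeminormedAddCommGroup G] [NormedSpace 𝕜 G]
    (L : (⨂[𝕜] i, E i) →ₗ[𝕜] G) {M : ℝ} (hM : 0 ≤ M)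
    (hL : ∀ m, ‖L (tprod 𝕜 m)‖ ≤ M * ∏ i, ‖m i‖) (x : ⨂[𝕜] i, E i) :
    ‖L x‖ ≤ M * ‖x‖ := by
  set f := (L.compMultilinearMap (tprod 𝕜)).mkContinuous M hL
  have hf : lift f.toMultilinearMap = L := ext <| MultilinearMap.ext fun _ => lift.tprod _
  calc ‖L x‖ = ‖lift f.toMultilinearMap x‖ := by rw [hf]
    _ ≤ ‖f‖ * ‖x‖ := norm_eval_le_projectiveSeminorm f x
    _ ≤ M * ‖x‖ := by gcongr; exact MultilinearMap.mkContinuous_norm_le _ hM hL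

theorem Summable.comp_nat_div {f : ℕ → ℝ} (hf : Summable f) (hf0 : ∀ k, 0 ≤ f k) {q : ℕ}
    (hq : q ≠ 0) : Summable fun n => f (n / q) := by
  have : NeZero q := ⟨hq⟩
  have hprod : Summable fun x : ℕ × Fin q => f x.1 * 1 :=
    hf.mul_of_nonneg (hasSum_fintype _).summable hf0 fun _ => zero_le_one
  simp only [mul_one] at hprod
  exact (Nat.divModEquiv q).summable_iff.mpr hprod

theorem Real.factorial_div_le_Gamma {p : ℝ} (hp : 0 < p) {q n : ℕ} (hpq : p ≤ q)
    (hqn : q ≤ n) :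
    ((n / q).factorial : ℝ) ≤ Real.Gamma (n / p + 1) := by
  have hn : 1 ≤ (n : ℝ) / p := by
    rw [le_div_iff₀ hp, one_mul]; exact hpq.trans (by exact_mod_cast hqn)
  set k := ⌊(n : ℝ) / p⌋₊
  have hk1 : (1 : ℝ) ≤ k := by exact_mod_cast Nat.le_floor (by exact_mod_cast hn)
  have hdiv : n / q ≤ k := Nat.le_floor <| Nat.cast_div_le.trans <|
    div_le_div_of_nonneg_left (Nat.cast_nonneg n) hp hpq
  calc ((n / q).factorial : ℝ) ≤ k.factorial := by exact_mod_cast Nat.factorial_le hdiv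
    _ = Real.Gamma (k + 1) := (Real.Gamma_nat_eq_factorial k).symm
    _ ≤ Real.Gamma (n / p + 1) :=
      Real.Gamma_strictMonoOn_Ici.monotoneOn (by simp; linarith) (by simp; linarith)
        (by linarith [Nat.floor_le (zero_le_one.trans hn)])

theorem Real.summable_pow_div_Gamma {p : ℝ} (hp : 0 < p) (y : ℝ) :
    Summable fun n : ℕ => y ^ n / Real.Gamma (n / p + 1) := by
  set q := ⌈p⌉₊
  have hq : q ≠ 0 := (Nat.ceil_pos.mpr hp).ne'
  set R := max |y| 1
  set t := R ^ q
  have hR : 1 ≤ R := le_max_right _ _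
  have hdom : Summable fun n : ℕ => t * (t ^ (n / q) / (n / q).factorial) :=
    ((Real.summable_pow_div_factorial t).comp_nat_div (fun k => by positivity) hq).mul_left t
  refine hdom.of_norm_bounded_eventually_nat (Filter.eventually_atTop.mpr ⟨q, fun n hn => ?_⟩)
  have hpow : |y| ^ n ≤ t * t ^ (n / q) :=
    calc |y| ^ n ≤ R ^ n := pow_le_pow_left₀ (abs_nonneg y) (le_max_left _ _) n
      _ ≤ R ^ (q * (n / q) + q) :=
        pow_le_pow_right₀ hR <| by
          linarith [Nat.div_add_mod n q, Nat.mod_lt n (Nat.pos_of_ne_zero hq)]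
      _ = t * t ^ (n / q) := by rw [pow_add, pow_mul, mul_comm]
  have hΓ : ((n / q).factorial : ℝ) ≤ Real.Gamma (n / p + 1) :=
    Real.factorial_div_le_Gamma hp (Nat.le_ceil p) hn
  rw [norm_div, norm_pow, Real.norm_eq_abs, mul_div_assoc',
    Real.norm_of_nonneg (Real.Gamma_pos_of_pos (by positivity)).le]
  exact div_le_div₀ (by positivity) hpow (by positivity) hΓ

theorem tendsto_rpow_one_div_of_summable_mul_pow {a : ℕ → ℝ} (ha : ∀ n, 0 ≤ a n)
    (hsum : ∀ z : ℝ, 0 ≤ z → Summable fun n => a n * z ^ n) :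
    Filter.Tendsto (fun n : ℕ => a n ^ ((1 : ℝ) / n)) Filter.atTop (nhds 0) := by
  refine tendsto_order.mpr ⟨fun b hb => Filter.Eventually.of_forall fun n =>
    hb.trans_le (Real.rpow_nonneg (ha n) _), fun ε hε => ?_⟩
  have hsmall : ∀ᶠ n in Filter.atTop, a n * ε⁻¹ ^ n < 1 :=
    (hsum ε⁻¹ (inv_nonneg.mpr hε.le)).tendsto_atTop_zero.eventually_lt_const one_pos
  filter_upwards [hsmall, Filter.eventually_ne_atTop 0] with n hn hn0
  have han : a n < ε ^ n := by
    rwa [inv_pow, ← div_eq_mul_inv, div_lt_one (by positivity)] at hn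
  calc a n ^ ((1 : ℝ) / n) < (ε ^ n) ^ ((1 : ℝ) / n) :=
        Real.rpow_lt_rpow (ha n) han (by positivity)
    _ = ε := by rw [one_div, Real.pow_rpow_inv_natCast hε.le hn0]

theorem tnorm_nonneg {n : ℕ} (x : TComp V n) : 0 ≤ tnorm x := norm_nonneg x

theorem mulComp_tprod_tprod {k m : ℕ} (a : Fin k → V) (b : Fin m → V) :
    mulComp (tprod ℝ a) (tprod ℝ b) =
      tprod ℝ (fun i => Sum.elim a b (finSumFinEquiv.symm i)) := by
  simp [mulComp, reindex_tprod]

theorem tnorm_mulComp_tprod_tprod_le {k m : ℕ} (a : Fin k → V) (b : Fin m → V) :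
    tnorm (mulComp (tprod ℝ a) (tprod ℝ b)) ≤ (∏ i, ‖a i‖) * ∏ i, ‖b i‖ := by
  rw [mulComp_tprod_tprod]
  refine (projectiveSeminorm_tprod_le _).trans_eq ?_
  rw [Equiv.prod_comp finSumFinEquiv.symm fun j => ‖Sum.elim a b j‖, Fintype.prod_sum_type]
  rfl

def mulCompₗ (k m : ℕ) : TComp V k →ₗ[ℝ] TComp V m →ₗ[ℝ] TComp V (k + m) :=
  (TensorProduct.mk ℝ _ _).compr₂
    ((tmulEquiv ℝ V).trans (reindex ℝ (fun _ => V) finSumFinEquiv)).toLinearMap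

theorem tnorm_mulComp_le {k m : ℕ} (x : TComp V k) (y : TComp V m) :
    tnorm (mulComp x y) ≤ tnorm x * tnorm y := by
  have tprod_left (a : Fin k → V) (y : TComp V m) :
      tnorm (mulComp (tprod ℝ a) y) ≤ (∏ i, ‖a i‖) * tnorm y :=
    norm_map_le_of_norm_map_tprod_le (mulCompₗ k m (tprod ℝ a)) (by positivity)
      (tnorm_mulComp_tprod_tprod_le a) y
  rw [mul_comm]
  exact norm_map_le_of_norm_map_tprod_le ((mulCompₗ k m).flip y) (norm_nonneg y)
    (fun a => (tprod_left a y).trans_eq (mul_comm _ _)) x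

theorem tnorm_castComp {k m : ℕ} (h : k = m) (x : TComp V k) :
    tnorm (castComp h x) = tnorm x := by
  subst h
  simp [castComp]

theorem tnorm_seriesMul_le (ξ η : TSeries V) (n : ℕ) :
    tnorm (seriesMul ξ η n) ≤
      ∑ k ∈ Finset.range (n + 1), tnorm (ξ k) * tnorm (η (n - k)) := by
  rw [← Finset.sum_attach]
  refine (norm_sum_le (E := TComp V n) _ _).trans (Finset.sum_le_sum fun k _ => ?_)
  exact (tnorm_castComp _ _).trans_le (tnorm_mulComp_le _ _)

def TSeries.HasInfiniteRadius (ξ : TSeries V) : Prop :=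
  ∀ z : ℝ, 0 ≤ z → Summable fun n => tnorm (ξ n) * z ^ n

theorem TSeries.HasInfiniteRadius.seriesMul {ξ η : TSeries V} (hξ : ξ.HasInfiniteRadius)
    (hη : η.HasInfiniteRadius) : (_root_.seriesMul ξ η).HasInfiniteRadius := by
  intro z hz
  set a := fun n => tnorm (ξ n) * z ^ n
  set b := fun n => tnorm (η n) * z ^ n
  have hab : Summable fun n => ∑ k ∈ Finset.range (n + 1), a k * b (n - k) :=
    summable_sum_mul_range_of_summable_mul <| (hξ z hz).mul_of_nonneg (hη z hz)
      (fun n => mul_nonneg (tnorm_nonneg _) (pow_nonneg hz n))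
      (fun n => mul_nonneg (tnorm_nonneg _) (pow_nonneg hz n))
  refine hab.of_nonneg_of_le (fun n => mul_nonneg (tnorm_nonneg _) (pow_nonneg hz n))
    fun n => ?_
  calc tnorm (_root_.seriesMul ξ η n) * z ^ n
      ≤ (∑ k ∈ Finset.range (n + 1), tnorm (ξ k) * tnorm (η (n - k))) * z ^ n := by
        gcongr; exact tnorm_seriesMul_le ξ η n
    _ = ∑ k ∈ Finset.range (n + 1), a k * b (n - k) := by
        rw [Finset.sum_mul]
        refine Finset.sum_congr rfl fun k hk => ?_
        rw [← pow_mul_pow_sub z (Finset.mem_range_succ_iff.mp hk)]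
        ring

theorem TSeries.hasInfiniteRadius_of_tnorm_le {g : TSeries V} {C ω p : ℝ} (hω : 0 ≤ ω)
    (hp : 0 < p) (hg : ∀ n : ℕ, 1 ≤ n →
      tnorm (g n) ≤ C * ω ^ ((n : ℝ) / p) / Real.Gamma ((n : ℝ) / p + 1)) :
    g.HasInfiniteRadius := by
  intro z hz
  have hdom : Summable fun n : ℕ => C * ((ω ^ p⁻¹ * z) ^ n / Real.Gamma (n / p + 1)) :=
    (Real.summable_pow_div_Gamma hp _).mul_left C
  refine (summable_nat_add_iff 1).mp ((summable_nat_add_iff 1).mpr hdom |>.of_nonneg_of_le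
    (fun n => mul_nonneg (tnorm_nonneg _) (pow_nonneg hz _)) fun n => ?_)
  calc tnorm (g (n + 1)) * z ^ (n + 1)
      ≤ C * ω ^ ((↑(n + 1) : ℝ) / p) / Real.Gamma (↑(n + 1) / p + 1) * z ^ (n + 1) := by
        gcongr; exact hg (n + 1) le_add_self
    _ = C * ((ω ^ p⁻¹ * z) ^ (n + 1) / Real.Gamma (↑(n + 1) / p + 1)) := by
        rw [mul_pow, ← Real.rpow_mul_natCast hω, ← div_eq_inv_mul]
        ring

theorem conjugated_series_infinite_radius_general
    (ξ g₁ g₂ : TSeries V)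
    (hξ : ∀ z : ℝ, Summable fun n => tnorm (ξ n) * z ^ n)
    (C ω p : ℝ) (hω : 0 < ω) (hp : 1 ≤ p)
    (hg₁ : ∀ n : ℕ, 1 ≤ n →
      tnorm (g₁ n) ≤ C * ω ^ ((n : ℝ) / p) / Real.Gamma ((n : ℝ) / p + 1))
    (hg₂ : ∀ n : ℕ, 1 ≤ n →
      tnorm (g₂ n) ≤ C * ω ^ ((n : ℝ) / p) / Real.Gamma ((n : ℝ) / p + 1)) :
    Filter.limsup
      (fun n : ℕ => tnorm (seriesMul (seriesMul g₁ ξ) g₂ n) ^ ((1 : ℝ) / n))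
      Filter.atTop = 0 := by
  have hp0 : 0 < p := zero_lt_one.trans_le hp
  have hconj : (seriesMul (seriesMul g₁ ξ) g₂).HasInfiniteRadius :=
    ((TSeries.hasInfiniteRadius_of_tnorm_le hω.le hp0 hg₁).seriesMul fun z _ => hξ z).seriesMul
      (TSeries.hasInfiniteRadius_of_tnorm_le hω.le hp0 hg₂)
  exact (tendsto_rpow_one_div_of_summable_mul_pow (fun n => tnorm_nonneg _) hconj).limsup_eq

/-- Let `ξ ∈ T₀((V))` (i.e. `ξ₀ = 0`) have infinite radius of
convergence (`Σ ‖ξₙ‖ zⁿ` converges for every `z`), and let `g₁, g₂ ∈ T₁((V))` satisfy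
factorial decay `‖πₙ(gᵢ)‖ ≤ C ω^{n/p}/(n/p)!` for all `n ≥ 1`.  Then the tensor
series `g₁ ⊗ ξ ⊗ g₂` also has infinite radius of convergence:
`limsup_{n→∞} ‖πₙ(g₁ ⊗ ξ ⊗ g₂)‖^{1/n} = 0`. -/
theorem conjugated_series_infinite_radius
    (ξ g₁ g₂ : TSeries V)
    (hξ0 : ξ 0 = 0)
    (hg₁0 : g₁ 0 = oneComp) (hg₂0 : g₂ 0 = oneComp)
    (hξ : ∀ z : ℝ, Summable fun n => tnorm (ξ n) * z ^ n)
    (C ω p : ℝ) (hC : 0 < C) (hω : 0 < ω) (hp : 1 ≤ p)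
    (hg₁ : ∀ n : ℕ, 1 ≤ n →
      tnorm (g₁ n) ≤ C * ω ^ ((n : ℝ) / p) / Real.Gamma ((n : ℝ) / p + 1))
    (hg₂ : ∀ n : ℕ, 1 ≤ n →
      tnorm (g₂ n) ≤ C * ω ^ ((n : ℝ) / p) / Real.Gamma ((n : ℝ) / p + 1)) :
    Filter.limsup
      (fun n : ℕ => tnorm (seriesMul (seriesMul g₁ ξ) g₂ n) ^ ((1 : ℝ) / n))
      Filter.atTop = 0 :=
  conjugated_series_infinite_radius_general ξ g₁ g₂ hξ C ω p hω hp hg₁ hg₂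

end
end

section
/- Let γ = (x_t, y_t) be a continuous bounded-variation path in ℝ² with γ₀ = (0,0), γ₁ = (1,0). If ∫₀¹ e^{2kπi x_s + λ i y_s} dy_s = 0 for all k ∈ ℤ and all λ ∈ ℝ, then for every continuous function g : ℝ² → ℂ that is 1-periodic in the first variable, ∫₀¹ g(x_s, y_s) dy_s = 0. -/
/-!
The functional `f ↦ ∫₀¹ f(x_t, y_t) dy_t` is continuous and linear on `C(𝕊¹ × [-M, M], ℂ)`,
where `[-M, M]` contains the range of `y`, because `dy` has finite total variation. By hypothesis
it kills the modes `e^{2πikx} e^{iλy}`, whose span is a unital star subalgebra separating points,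
hence dense by Stone–Weierstrass. A continuous `g` that is `1`-periodic in `x` descends to
`𝕊¹ × [-M, M]`, so its integral vanishes as well.
-/

open MeasureTheory Set Complex Submodule

noncomputable section

section FourierExp

variable {T : ℝ} {s : Set ℝ}

def fourierExp (k : ℤ) (l : ℝ) : C(AddCircle T × s, ℂ) :=
  (fourier k).comp ContinuousMap.fst * ⟨fun q => exp (l * I * q.2), by fun_prop⟩

theorem fourierExp_apply (k : ℤ) (l : ℝ) (q : AddCircle T × s) :
    fourierExp k l q = fourier k q.1 * exp (l * I * q.2) :=
  rfl

theorem fourierExp_add (k k' : ℤ) (l l' : ℝ) :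
    fourierExp (T := T) (s := s) (k + k') (l + l') = fourierExp k l * fourierExp k' l' := by
  ext q
  simp only [ContinuousMap.mul_apply, fourierExp_apply, fourier_add, Complex.ofReal_add, add_mul,
    exp_add]
  ring

theorem fourierExp_zero : fourierExp (T := T) (s := s) 0 0 = 1 := by
  ext q
  simp [fourierExp_apply]

theorem star_fourierExp (k : ℤ) (l : ℝ) :
    star (fourierExp (T := T) (s := s) k l) = fourierExp (-k) (-l) := by
  ext q
  simp only [ContinuousMap.star_apply, fourierExp_apply, star_mul', fourier_neg]
  congr 1
  rw [Complex.star_def, ← exp_conj]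
  simp

def fourierExpSubalgebra : StarSubalgebra ℂ C(AddCircle T × s, ℂ) where
  toSubalgebra := Algebra.adjoin ℂ (range (Function.uncurry fourierExp))
  star_mem' := by
    change Algebra.adjoin ℂ (range (Function.uncurry fourierExp)) ≤
      star (Algebra.adjoin ℂ (range (Function.uncurry (fourierExp (T := T) (s := s)))))
    refine Algebra.adjoin_le ?_
    rintro - ⟨⟨k, l⟩, rfl⟩
    exact Algebra.subset_adjoin ⟨(-k, -l), (star_fourierExp k l).symm⟩

theorem fourierExpSubalgebra_coe :
    Subalgebra.toSubmodule (fourierExpSubalgebra (T := T) (s := s)).toSubalgebra =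
      span ℂ (range (Function.uncurry fourierExp)) := by
  apply Algebra.adjoin_eq_span_of_subset
  refine Subset.trans ?_ subset_span
  intro f hf
  refine Submonoid.closure_induction (fun _ => id) ⟨(0, 0), fourierExp_zero⟩ ?_ hf
  rintro - - - - ⟨⟨k, l⟩, rfl⟩ ⟨⟨k', l'⟩, rfl⟩
  exact ⟨(k + k', l + l'), fourierExp_add k k' l l'⟩

theorem fourierExpSubalgebra_separatesPoints [hT : Fact (0 < T)] :
    (fourierExpSubalgebra (T := T) (s := s)).SeparatesPoints := by
  rintro ⟨z₁, w₁⟩ ⟨z₂, w₂⟩ hne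
  by_cases hz : z₁ = z₂
  · have hw : (w₁ : ℝ) - w₂ ≠ 0 := sub_ne_zero.2 fun h => hne (by rw [hz, Subtype.ext h])
    refine ⟨_, ⟨fourierExp 0 (Real.pi / (w₁ - w₂)), Algebra.subset_adjoin ⟨(0, _), rfl⟩, rfl⟩, ?_⟩
    intro h
    -- `λ = π / (w₁ - w₂)` turns equal values into `e^{iπ} = 1`.
    have harg : ((Real.pi / (w₁ - w₂) : ℝ) : ℂ) * I * (w₁ : ℝ) -
        ((Real.pi / (w₁ - w₂) : ℝ) : ℂ) * I * (w₂ : ℝ) = Real.pi * I := by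
      have : ((w₁ : ℝ) : ℂ) - (w₂ : ℝ) ≠ 0 := by exact_mod_cast hw
      push_cast
      field_simp
    have h1 : exp (Real.pi * I) = 1 := by
      simp only [fourierExp_apply, fourier_zero, one_mul] at h
      rw [← harg, exp_sub, h, div_self (exp_ne_zero _)]
    rw [exp_pi_mul_I] at h1
    norm_num at h1
  · refine ⟨_, ⟨fourierExp 1 0, Algebra.subset_adjoin ⟨(1, 0), rfl⟩, rfl⟩, ?_⟩
    intro h
    simp only [fourierExp_apply, fourier_one, Complex.ofReal_zero, zero_mul, exp_zero, mul_one]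
      at h
    exact hz (AddCircle.injective_toCircle hT.out.ne' (Subtype.ext h))

theorem span_fourierExp_closure_eq_top [Fact (0 < T)] [CompactSpace s] :
    (span ℂ (range (Function.uncurry (fourierExp (T := T) (s := s))))).topologicalClosure = ⊤ := by
  rw [← fourierExpSubalgebra_coe]
  exact congr_arg (Subalgebra.toSubmodule <| StarSubalgebra.toSubalgebra ·)
    (ContinuousMap.starSubalgebra_topologicalClosure_eq_top_of_separatesPoints _
      fourierExpSubalgebra_separatesPoints)

end FourierExp

section PeriodicLift

variable {T : ℝ} {Y Z : Type*} [TopologicalSpace Y] [TopologicalSpace Z]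

def ContinuousMap.addCircleProdLift (g : C(ℝ × Y, Z)) (hg : ∀ u y, g (u + T, y) = g (u, y)) :
    C(AddCircle T × Y, Z) where
  toFun q := Function.Periodic.lift (f := fun u => g (u, q.2)) (fun u => hg u q.2) q.1
  continuous_toFun := by
    rw [(QuotientAddGroup.isOpenQuotientMap_mk.prodMap IsOpenQuotientMap.id).isQuotientMap
      |>.continuous_iff]
    exact g.continuous

end PeriodicLift

section WeightedIntegral

variable {α X : Type*} [MeasurableSpace α] {μ : Measure α} [TopologicalSpace X] [CompactSpace X]
  {p : α → X} {w : α → ℂ}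

theorem ContinuousMap.integrable_comp_mul (f : C(X, ℂ)) (hp : AEStronglyMeasurable p μ)
    (hw : Integrable w μ) : Integrable (fun t => f (p t) * w t) μ :=
  hw.bdd_mul (f.continuous.comp_aestronglyMeasurable hp) (ae_of_all _ fun _ => f.norm_coe_le_norm _)

def integralCompMulCLM (hp : AEStronglyMeasurable p μ) (hw : Integrable w μ) :
    C(X, ℂ) →L[ℂ] ℂ :=
  LinearMap.mkContinuous
    { toFun := fun f => ∫ t, f (p t) * w t ∂μ
      map_add' := fun f f' => by
        simp only [ContinuousMap.add_apply, add_mul]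
        exact integral_add (f.integrable_comp_mul hp hw) (f'.integrable_comp_mul hp hw)
      map_smul' := fun c f => by
        simp only [ContinuousMap.smul_apply, smul_eq_mul, mul_assoc, RingHom.id_apply]
        exact integral_const_mul c _ }
    (∫ t, ‖w t‖ ∂μ) fun f => by
      calc ‖∫ t, f (p t) * w t ∂μ‖ ≤ ∫ t, ‖f‖ * ‖w t‖ ∂μ :=
            norm_integral_le_of_norm_le (hw.norm.const_mul _) <| ae_of_all _ fun t => by
              rw [norm_mul]
              gcongr
              exact f.norm_coe_le_norm _
        _ = (∫ t, ‖w t‖ ∂μ) * ‖f‖ := by rw [integral_const_mul, mul_comm]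

theorem integral_comp_mul_eq_zero_of_span_dense {S : Set C(X, ℂ)}
    (hS : (span ℂ S).topologicalClosure = ⊤) (hp : AEStronglyMeasurable p μ) (hw : Integrable w μ)
    (hS₀ : ∀ f ∈ S, ∫ t, f (p t) * w t ∂μ = 0) (f : C(X, ℂ)) : ∫ t, f (p t) * w t ∂μ = 0 := by
  have hker : span ℂ S ≤ (integralCompMulCLM hp hw : C(X, ℂ) →ₗ[ℂ] ℂ).ker := span_le.2 hS₀
  have hclosure := topologicalClosure_minimal _ hker (integralCompMulCLM hp hw).isClosed_ker
  rw [hS] at hclosure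
  exact hclosure (mem_top (x := f))

end WeightedIntegral

/-- The Lebesgue–Stieltjes integral `∫₀¹ f dy` is modelled as `∫_{[0,1]} f · gy dν`. -/
theorem periodic_integrals_vanish_general
    (x y : ℝ → ℝ)
    (hx : ContinuousOn x (Icc 0 1)) (hy : ContinuousOn y (Icc 0 1))
    (ν : Measure ℝ) (gy : ℝ → ℝ)
    (hgy : Integrable gy (ν.restrict (Icc 0 1)))
    (hint : ∀ (k : ℤ) (l : ℝ),
      ∫ t in Icc (0 : ℝ) 1,
          Complex.exp (2 * k * Real.pi * Complex.I * (x t) + l * Complex.I * (y t))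
            * (gy t : ℂ) ∂ν = 0)
    (g : ℝ × ℝ → ℂ) (hg : Continuous g)
    (hper : ∀ a b : ℝ, g (a + 1, b) = g (a, b)) :
    ∫ t in Icc (0 : ℝ) 1, g (x t, y t) * (gy t : ℂ) ∂ν = 0 := by
  have : Fact ((0 : ℝ) < 1) := ⟨one_pos⟩
  obtain ⟨M, hM⟩ := isCompact_Icc.exists_bound_of_continuousOn hy
  have hM₀ : -M ≤ M := neg_le_self <| (norm_nonneg _).trans (hM 0 (left_mem_Icc.2 zero_le_one))
  have hyM : ∀ t ∈ Icc (0 : ℝ) 1, y t ∈ Icc (-M) M := fun t ht => abs_le.1 (hM t ht)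
  let p : ℝ → AddCircle (1 : ℝ) × Icc (-M) M := fun t => (x t, projIcc (-M) M hM₀ (y t))
  have hp : ContinuousOn p (Icc 0 1) :=
    ((AddCircle.continuous_mk' 1).comp_continuousOn hx).prodMk
      (continuous_projIcc.comp_continuousOn hy)
  have hp_eq : ∀ t (ht : t ∈ Icc (0 : ℝ) 1),
      p t = ((x t : AddCircle (1 : ℝ)), ⟨y t, hyM t ht⟩) := fun t ht => by
    simp only [p, projIcc_of_mem hM₀ (hyM t ht)]
  let G := ContinuousMap.addCircleProdLift ⟨fun q : ℝ × Icc (-M) M => g (q.1, q.2), by fun_prop⟩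
    fun u w => hper u w
  have hmodes : ∀ f ∈ range (Function.uncurry fourierExp),
      ∫ t in Icc (0 : ℝ) 1, f (p t) * (gy t : ℂ) ∂ν = 0 := by
    rintro - ⟨⟨k, l⟩, rfl⟩
    rw [← hint k l]
    refine setIntegral_congr_fun measurableSet_Icc fun t ht => ?_
    simp only [Function.uncurry_apply_pair, hp_eq t ht, fourierExp_apply, fourier_coe_apply,
      ← exp_add]
    push_cast
    ring_nf
  calc ∫ t in Icc (0 : ℝ) 1, g (x t, y t) * (gy t : ℂ) ∂ν
      = ∫ t in Icc (0 : ℝ) 1, G (p t) * (gy t : ℂ) ∂ν :=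
        setIntegral_congr_fun measurableSet_Icc fun t ht => by rw [hp_eq t ht]; rfl
    _ = 0 := integral_comp_mul_eq_zero_of_span_dense span_fourierExp_closure_eq_top
        (hp.aestronglyMeasurable measurableSet_Icc) hgy.ofReal hmodes G

/-- Let `γ = (x,y)` be a continuous bounded-variation path in `ℝ²`
with `γ₀ = (0,0)`, `γ₁ = (1,0)`.  The (signed) Lebesgue–Stieltjes measure `dy` is
encoded by a finite measure `ν` together with a density `gy` (so that
`∫_{[a,b]} gy dν = y_b − y_a`), and `∫₀¹ f dy := ∫_{[0,1]} f·gy dν`.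
If `∫₀¹ e^{2kπi x_s + λ i y_s} dy_s = 0` for all `k ∈ ℤ` and all `λ ∈ ℝ`, then
`∫₀¹ g(x_s, y_s) dy_s = 0` for every continuous `g : ℝ² → ℂ` that is `1`-periodic in
its first variable. -/
theorem periodic_integrals_vanish
    (x y : ℝ → ℝ)
    (hx : ContinuousOn x (Icc 0 1)) (hy : ContinuousOn y (Icc 0 1))
    (hx0 : x 0 = 0) (hy0 : y 0 = 0) (hx1 : x 1 = 1) (hy1 : y 1 = 0)
    (ν : Measure ℝ) [IsFiniteMeasure ν] (gy : ℝ → ℝ)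
    (hgy : Integrable gy (ν.restrict (Icc 0 1)))
    (hlink : ∀ a b : ℝ, 0 ≤ a → a ≤ b → b ≤ 1 →
      ∫ t in Icc a b, gy t ∂ν = y b - y a)
    (hint : ∀ (k : ℤ) (l : ℝ),
      ∫ t in Icc (0 : ℝ) 1,
          Complex.exp (2 * k * Real.pi * Complex.I * (x t) + l * Complex.I * (y t))
            * (gy t : ℂ) ∂ν = 0)
    (g : ℝ × ℝ → ℂ) (hg : Continuous g)
    (hper : ∀ a b : ℝ, g (a + 1, b) = g (a, b)) :
    ∫ t in Icc (0 : ℝ) 1, g (x t, y t) * (gy t : ℂ) ∂ν = 0 :=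
  periodic_integrals_vanish_general x y hx hy ν gy hgy hint g hg hper
end
end

section
/- Let γ : [0,K] → ℝ² be parametrised at unit speed, differentiable at s with |γ′_s| = 1, and let ε ∈ (0, 1/6]. Suppose T ∈ (s, K] satisfies, for all t ∈ (s, T]: |γ_t − γ_s − γ′_s (t − s)| ≤ ε(t − s) and ||γ_t − γ_s|/(t − s) − 1| ≤ ε. Then the normalised path 𝒜_{s,T}γ satisfies, for every t ∈ [s, T]: |(𝒜_{s,T}γ)_t²| ≤ (2ε/(1 − 3ε)) · (𝒜_{s,T}γ)_t¹, i.e. the image of 𝒜_{s,T}γ lies in the cone {(x,y) : |y| ≤ 2ε x/(1 − 3ε)}. -/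
/-!
Put `u = γ_T - γ_s`, `w = γ_t - γ_s` and `λ = (t - s)/(T - s)`. Both `w` and `λ u` lie within
`ε (t - s)` of `(t - s) v`, so the chord error `w - λ u` has norm at most `2ε (t - s)`. The
rotation sends `λ u` to `λ ‖u‖ e₁` with `λ ‖u‖ ≥ (1 - ε)(t - s)`, so `R w` has second coordinate
at most `2ε (t - s)` in absolute value and first coordinate at least `(1 - 3ε)(t - s)`.
Dividing by `‖u‖ > 0` preserves the cone.
-/

noncomputable section

/-- The point `(1,0)` of the Euclidean plane. -/
def e₁ : EuclideanSpace ℝ (Fin 2) := (WithLp.equiv 2 (Fin 2 → ℝ)).symm ![1, 0]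

theorem norm_sub_div_smul_le_of_approx {E : Type*} [SeminormedAddCommGroup E] [NormedSpace ℝ E]
    {u v w : E} {a b ε : ℝ} (ha : 0 ≤ a) (hb : 0 < b)
    (hw : ‖w - a • v‖ ≤ ε * a) (hu : ‖u - b • v‖ ≤ ε * b) :
    ‖w - (a / b) • u‖ ≤ 2 * ε * a := by
  have hratio : 0 ≤ a / b := div_nonneg ha hb.le
  have hsplit : w - (a / b) • u = (w - a • v) - (a / b) • (u - b • v) := by
    rw [smul_sub, smul_smul, div_mul_cancel₀ a hb.ne']
    abel
  calc ‖w - (a / b) • u‖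
      ≤ ‖w - a • v‖ + a / b * ‖u - b • v‖ := by
        rw [hsplit]
        refine (norm_sub_le _ _).trans_eq ?_
        rw [norm_smul, Real.norm_of_nonneg hratio]
    _ ≤ ε * a + a / b * (ε * b) := by gcongr
    _ = 2 * ε * a := by field_simp; ring

theorem abs_apply_one_le_and_sub_le_apply_zero {x : EuclideanSpace ℝ (Fin 2)} {r δ : ℝ}
    (hx : ‖x - r • e₁‖ ≤ δ) : |x 1| ≤ δ ∧ r - δ ≤ x 0 := by
  have hcoord : ∀ i, |x i - r * e₁ i| ≤ δ := fun i =>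
    (PiLp.norm_apply_le (x - r • e₁) i).trans hx
  have h1 := hcoord 1
  have h0 := abs_le.1 (hcoord 0)
  simp only [e₁, WithLp.equiv_symm_apply, PiLp.toLp_apply, Matrix.cons_val_one,
    Matrix.cons_val_zero, mul_zero, sub_zero, mul_one] at h1 h0
  exact ⟨h1, by linarith [h0.1]⟩

theorem normalised_path_in_cone_general
    (K : ℝ) (γ : ℝ → EuclideanSpace ℝ (Fin 2))
    (s : ℝ)
    (v : EuclideanSpace ℝ (Fin 2))
    (ε : ℝ) (hε : ε ∈ Set.Ioc 0 (1 / 6 : ℝ))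
    (T : ℝ) (hT : T ∈ Set.Ioc s K)
    (h1 : ∀ t ∈ Set.Ioc s T, ‖γ t - γ s - (t - s) • v‖ ≤ ε * (t - s))
    (h2 : ∀ t ∈ Set.Ioc s T, |‖γ t - γ s‖ / (t - s) - 1| ≤ ε)
    (R : EuclideanSpace ℝ (Fin 2) ≃ₗᵢ[ℝ] EuclideanSpace ℝ (Fin 2))
    (hR : R (γ T - γ s) = ‖γ T - γ s‖ • e₁) :
    ∀ t ∈ Set.Icc s T,
      |(WithLp.equiv 2 (Fin 2 → ℝ)) (‖γ T - γ s‖⁻¹ • R (γ t - γ s)) 1|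
        ≤ (2 * ε / (1 - 3 * ε)) *
            (WithLp.equiv 2 (Fin 2 → ℝ)) (‖γ T - γ s‖⁻¹ • R (γ t - γ s)) 0 := by
  rintro t ⟨hst, htT⟩
  obtain ⟨hε0, hε6⟩ := hε
  have hb : 0 < T - s := sub_pos.2 hT.1
  have hTmem : T ∈ Set.Ioc s T := ⟨hT.1, le_rfl⟩
  have happrox : ‖γ t - γ s - (t - s) • v‖ ≤ ε * (t - s) := by
    rcases hst.eq_or_lt with rfl | hst
    · simp
    · exact h1 t ⟨hst, htT⟩
  have hchord := norm_sub_div_smul_le_of_approx (sub_nonneg.2 hst) hb happrox (h1 T hTmem)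
  have hlen : (1 - ε) * (T - s) ≤ ‖γ T - γ s‖ := by
    rw [← le_div_iff₀ hb]
    linarith [(abs_le.1 (h2 T hTmem)).1]
  have hrot : ‖R (γ t - γ s) - ((t - s) / (T - s) * ‖γ T - γ s‖) • e₁‖ ≤ 2 * ε * (t - s) := by
    rwa [mul_smul, ← hR, ← map_smul, ← map_sub, R.norm_map]
  have hr : (1 - ε) * (t - s) ≤ (t - s) / (T - s) * ‖γ T - γ s‖ := by
    rw [div_mul_eq_mul_div, le_div_iff₀ hb]
    nlinarith [sub_nonneg.2 hst]
  obtain ⟨hy, hx⟩ := abs_apply_one_le_and_sub_le_apply_zero hrot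
  have hcone : |R (γ t - γ s) 1| ≤ 2 * ε / (1 - 3 * ε) * R (γ t - γ s) 0 := by
    rw [div_mul_eq_mul_div, le_div_iff₀ (by linarith)]
    nlinarith [abs_nonneg (R (γ t - γ s) 1)]
  show |‖γ T - γ s‖⁻¹ * _| ≤ _ * (‖γ T - γ s‖⁻¹ * _)
  rw [abs_mul, abs_of_nonneg (inv_nonneg.2 (norm_nonneg _)), mul_left_comm]
  exact mul_le_mul_of_nonneg_left hcone (inv_nonneg.2 (norm_nonneg _))

/-- **cone lemma.** Let `γ : [0,K] → ℝ²` be parametrised at unit speed,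
differentiable at `s` with `|γ′_s| = 1`, `ε ∈ (0,1/6]`, and `T ∈ (s,K]` with
`|γ_t − γ_s − γ′_s(t−s)| ≤ ε(t−s)` and `||γ_t − γ_s|/(t−s) − 1| ≤ ε` for `t ∈ (s,T]`.
Then the normalised path `𝒜_{s,T}γ` (where `𝒜_{s,T}(x) = |γ_T − γ_s|⁻¹ R(x − γ_s)`
and `R` rotates `γ_T − γ_s` to `(|γ_T − γ_s|,0)`) satisfies, for all `t ∈ [s,T]`,
`|(𝒜_{s,T}γ)_t²| ≤ (2ε/(1−3ε))·(𝒜_{s,T}γ)_t¹`: its image lies in the cone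
`{(x,y) : |y| ≤ 2εx/(1−3ε)}`. -/
theorem normalised_path_in_cone
    (K : ℝ) (γ : ℝ → EuclideanSpace ℝ (Fin 2))
    (hunit : LipschitzOnWith 1 γ (Set.Icc 0 K))
    (s : ℝ) (hs : s ∈ Set.Ico 0 K)
    (v : EuclideanSpace ℝ (Fin 2)) (hderiv : HasDerivAt γ v s) (hv : ‖v‖ = 1)
    (ε : ℝ) (hε : ε ∈ Set.Ioc 0 (1 / 6 : ℝ))
    (T : ℝ) (hT : T ∈ Set.Ioc s K)
    (h1 : ∀ t ∈ Set.Ioc s T, ‖γ t - γ s - (t - s) • v‖ ≤ ε * (t - s))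
    (h2 : ∀ t ∈ Set.Ioc s T, |‖γ t - γ s‖ / (t - s) - 1| ≤ ε)
    (R : EuclideanSpace ℝ (Fin 2) ≃ₗᵢ[ℝ] EuclideanSpace ℝ (Fin 2))
    (hR : R (γ T - γ s) = ‖γ T - γ s‖ • e₁) :
    ∀ t ∈ Set.Icc s T,
      |(WithLp.equiv 2 (Fin 2 → ℝ)) (‖γ T - γ s‖⁻¹ • R (γ t - γ s)) 1|
        ≤ (2 * ε / (1 - 3 * ε)) *
            (WithLp.equiv 2 (Fin 2 → ℝ)) (‖γ T - γ s‖⁻¹ • R (γ t - γ s)) 0 :=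
  normalised_path_in_cone_general K γ s v ε hε T hT h1 h2 R hR

end
end

section
/- Suppose γ = (x,y) : [0,1] → ℝ² is a continuous BV path with x₀ = y₀ = 0, x₁ = 1, and suppose that for every nonzero integer k and every b ∈ ℂ the identity (1 − cosh b)·∫∫_{0<s<t<1}(e^{2kπi x_s + b(x_t − x_s)} − e^{2kπi x_t + b(x_s − x_t)}) dy_s dy_t + (sinh b)·(∫₀¹ e^{b x_s} dy_s)(∫₀¹ e^{(2kπi − b)x_s} dy_s) = 0 holds, and also ∫₀¹ e^{2kπi x_t} dy_t = 0 for all k ∈ ℤ∖{0}. Then for all p, q ∈ ℤ∖{0} with p + q ≠ 0: ∫∫_{0<s<t<1}(e^{2πi(p x_s + q x_t)} − e^{2πi(p x_t + q x_s)}) dy_s dy_t = 0. -/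
open MeasureTheory Set Complex

/-!
Write `φ(b)` for the double integral with frequency `k = p + q` and `Y(b) = ∫₀¹ e^{b x} dy`, so
that the hypothesis reads `(1 - cosh b) φ(b) + sinh b · Y(b) Y(2kπi - b) = 0` and the claim is
`φ(b₀) = 0` for `b₀ = 2πiq`. As `b₀ ∈ 2πiℤ`, along the real line `b = b₀ + ε` the hypothesis
becomes `(cosh ε - 1) φ(b₀ + ε) = sinh ε · Y(2πiq + ε) Y(2πip - ε)`. The first-order condition
gives `Y(2πiq) = Y(2πip) = 0`, and `Y` is locally Lipschitz because `x` is bounded, so the right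
side is `O(ε³)`, whereas `cosh ε - 1 ≥ ε²/4`. Hence `φ(b₀ + ε) = O(ε)`, and `φ(b₀) = 0` by
continuity of `φ`.
-/

open Filter Topology Asymptotics

namespace Complex

theorem cosh_int_mul_two_pi_mul_I_add (n : ℤ) (z : ℂ) :
    cosh (n * (2 * Real.pi * I) + z) = cosh z := by
  simp [cosh, exp_add, exp_neg, exp_int_mul_two_pi_mul_I]

theorem sinh_int_mul_two_pi_mul_I_add (n : ℤ) (z : ℂ) :
    sinh (n * (2 * Real.pi * I) + z) = sinh z := by
  simp [sinh, exp_add, exp_neg, exp_int_mul_two_pi_mul_I]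

theorem norm_exp_mul_ofReal_le (c : ℂ) {r M : ℝ} (hr : |r| ≤ M) :
    ‖exp (c * r)‖ ≤ Real.exp (‖c‖ * M) := by
  rw [norm_exp, re_mul_ofReal, Real.exp_le_exp]
  calc c.re * r ≤ |c.re * r| := le_abs_self _
    _ = |c.re| * |r| := abs_mul _ _
    _ ≤ ‖c‖ * M := mul_le_mul (abs_re_le_norm c) hr (abs_nonneg r) (norm_nonneg c)

end Complex

theorem Real.one_add_sq_div_four_le_cosh (x : ℝ) : 1 + x ^ 2 / 4 ≤ Real.cosh x := by
  rw [← Real.cosh_abs, Real.cosh_eq]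
  have := Real.quadratic_le_exp_of_nonneg (abs_nonneg x)
  have := Real.add_one_le_exp (-|x|)
  nlinarith [sq_abs x]

theorem eq_zero_of_cosh_sub_one_mul_eq_sinh_mul {φ A B : ℝ → ℂ} (hφ : ContinuousAt φ 0)
    (hA : A =O[𝓝 0] fun ε => (ε : ℂ)) (hB : B =O[𝓝 0] fun ε => (ε : ℂ))
    (h : ∀ ε : ℝ, (cosh ε - 1) * φ ε = sinh ε * (A ε * B ε)) : φ 0 = 0 := by
  obtain ⟨CA, hCA⟩ := hA.bound
  obtain ⟨CB, hCB⟩ := hB.bound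
  have hbound : ∀ᶠ ε in 𝓝[≠] 0, ‖φ ε‖ ≤ 4 * (CA * CB) * |Real.sinh ε| := by
    filter_upwards [nhdsWithin_le_nhds hCA, nhdsWithin_le_nhds hCB, self_mem_nhdsWithin]
      with ε hAε hBε hε
    have hnorm : (Real.cosh ε - 1) * ‖φ ε‖ = |Real.sinh ε| * (‖A ε‖ * ‖B ε‖) := by
      have := congrArg norm (h ε)
      rwa [← ofReal_cosh, ← ofReal_sinh, ← ofReal_one, ← ofReal_sub, norm_mul, norm_mul,
        norm_mul, norm_real, norm_real, Real.norm_eq_abs, Real.norm_eq_abs,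
        abs_of_nonneg (sub_nonneg.2 (Real.one_le_cosh ε))] at this
    have hAB : ‖A ε‖ * ‖B ε‖ ≤ CA * CB * ε ^ 2 := by
      rw [norm_real, Real.norm_eq_abs] at hAε hBε
      calc ‖A ε‖ * ‖B ε‖ ≤ (CA * |ε|) * (CB * |ε|) :=
            mul_le_mul hAε hBε (norm_nonneg _) ((norm_nonneg _).trans hAε)
        _ = CA * CB * ε ^ 2 := by rw [← sq_abs ε]; ring
    have hε2 : 0 < ε ^ 2 := by
      have : ε ≠ 0 := hε
      positivity
    refine le_of_mul_le_mul_left ?_ hε2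
    calc ε ^ 2 * ‖φ ε‖ ≤ 4 * ((Real.cosh ε - 1) * ‖φ ε‖) := by
          nlinarith [Real.one_add_sq_div_four_le_cosh ε, norm_nonneg (φ ε)]
      _ ≤ 4 * (|Real.sinh ε| * (CA * CB * ε ^ 2)) := by
          rw [hnorm]; gcongr
      _ = ε ^ 2 * (4 * (CA * CB) * |Real.sinh ε|) := by ring
  have hsinh : Tendsto (fun ε => 4 * (CA * CB) * |Real.sinh ε|) (𝓝[≠] 0) (𝓝 0) :=
    ((by fun_prop : Continuous fun ε => 4 * (CA * CB) * |Real.sinh ε|).tendsto' 0 0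
      (by simp)).mono_left nhdsWithin_le_nhds
  exact tendsto_nhds_unique (hφ.tendsto.mono_left nhdsWithin_le_nhds)
    (squeeze_zero_norm' hbound hsinh)

section ExpIntegral

variable {α : Type*} [MeasurableSpace α] {μ : Measure α} {u : α → ℝ} {g : α → ℂ} {M : ℝ}

theorem integrable_exp_mul_mul (hu : AEStronglyMeasurable u μ) (huM : ∀ᵐ a ∂μ, |u a| ≤ M)
    (hg : Integrable g μ) (b : ℂ) : Integrable (fun a => exp (b * u a) * g a) μ :=
  hg.bdd_mul (by fun_prop) (huM.mono fun _ ha => norm_exp_mul_ofReal_le b ha)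

theorem isBigO_integral_exp_mul_mul_sub (hu : AEStronglyMeasurable u μ)
    (huM : ∀ᵐ a ∂μ, |u a| ≤ M) (hg : Integrable g μ) (c : ℂ) :
    (fun z : ℂ => ∫ a, exp ((c + z) * u a) * g a ∂μ - ∫ a, exp (c * u a) * g a ∂μ)
      =O[𝓝 0] id := by
  have hint := integrable_exp_mul_mul hu huM hg
  have hsmall : ∀ᶠ z in 𝓝 (0 : ℂ), ‖z‖ * M ≤ 1 :=
    ((by fun_prop : Continuous fun z : ℂ => ‖z‖ * M).tendsto' 0 0 (by simp)).eventually
      (eventually_le_nhds one_pos)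
  refine IsBigO.of_bound (2 * Real.exp (‖c‖ * M) * M * ∫ a, ‖g a‖ ∂μ) ?_
  filter_upwards [hsmall] with z hz
  rw [← integral_sub (hint _) (hint c), id, ← integral_const_mul, ← integral_mul_const]
  refine norm_integral_le_of_norm_le ((hg.norm.const_mul _).mul_const _) ?_
  filter_upwards [huM] with a ha
  have hzu : ‖z * u a‖ ≤ ‖z‖ * M := by
    rw [norm_mul, norm_real, Real.norm_eq_abs]
    gcongr
  calc ‖exp ((c + z) * u a) * g a - exp (c * u a) * g a‖
      = ‖exp (c * u a)‖ * ‖exp (z * u a) - 1‖ * ‖g a‖ := by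
        rw [add_mul, exp_add, ← sub_mul, ← mul_sub_one, norm_mul, norm_mul]
    _ ≤ Real.exp (‖c‖ * M) * (2 * (‖z‖ * M)) * ‖g a‖ := by
        gcongr
        · exact norm_exp_mul_ofReal_le c ha
        · exact (norm_exp_sub_one_le (hzu.trans hz)).trans (by gcongr)
    _ = 2 * Real.exp (‖c‖ * M) * M * ‖g a‖ * ‖z‖ := by ring

theorem continuous_integral_exp_mul_mul (hu : AEStronglyMeasurable u μ)
    (huM : ∀ᵐ a ∂μ, |u a| ≤ M) (hg : Integrable g μ) :
    Continuous fun b : ℂ => ∫ a, exp (b * u a) * g a ∂μ := by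
  refine continuous_iff_continuousAt.2 fun c => ?_
  rw [ContinuousAt, ← map_add_left_nhds_zero, tendsto_map'_iff, ← tendsto_sub_nhds_zero_iff]
  exact (isBigO_integral_exp_mul_mul_sub hu huM hg c).trans_tendsto tendsto_id

end ExpIntegral

section Path

def openSimplex : Set (ℝ × ℝ) := {q | 0 < q.1 ∧ q.1 < q.2 ∧ q.2 < 1}

theorem measurableSet_openSimplex : MeasurableSet openSimplex :=
  (measurableSet_lt measurable_const measurable_fst).inter
    ((measurableSet_lt measurable_fst measurable_snd).inter
      (measurableSet_lt measurable_snd measurable_const))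

theorem openSimplex_subset_Icc_prod : openSimplex ⊆ Icc 0 1 ×ˢ Icc 0 1 :=
  fun _ ⟨h₁, h₂, h₃⟩ => ⟨⟨h₁.le, (h₂.trans h₃).le⟩, ⟨(h₁.trans h₂).le, h₃.le⟩⟩

theorem restrict_openSimplex_le (ν : Measure ℝ) [SFinite ν] :
    (ν.prod ν).restrict openSimplex ≤ (ν.restrict (Icc 0 1)).prod (ν.restrict (Icc 0 1)) := by
  rw [Measure.prod_restrict]
  exact Measure.restrict_mono openSimplex_subset_Icc_prod le_rfl

noncomputable def expLineIntegral (x gy : ℝ → ℝ) (ν : Measure ℝ) (b : ℂ) : ℂ :=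
  ∫ t in Icc (0 : ℝ) 1, exp (b * (x t : ℂ)) * (gy t : ℂ) ∂ν

/-- The paper's `φ(b)` for the frequency `k`; its `ψ(b)` is
`expLineIntegral x gy ν b * expLineIntegral x gy ν (2 * k * π * I - b)`. -/
noncomputable def expDoubleIntegral (x gy : ℝ → ℝ) (ν : Measure ℝ) (k : ℤ) (b : ℂ) : ℂ :=
  ∫ r in openSimplex,
    (exp (2 * k * Real.pi * I * (x r.1) + b * ((x r.2 : ℂ) - (x r.1 : ℂ)))
      - exp (2 * k * Real.pi * I * (x r.2) + b * ((x r.1 : ℂ) - (x r.2 : ℂ))))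
      * (gy r.1 : ℂ) * (gy r.2 : ℂ) ∂(ν.prod ν)

variable {x gy : ℝ → ℝ} {ν : Measure ℝ}

theorem isBigO_expLineIntegral_sub (hx : ContinuousOn x (Icc 0 1))
    (hgy : Integrable gy (ν.restrict (Icc 0 1))) (c : ℂ) :
    (fun z => expLineIntegral x gy ν (c + z) - expLineIntegral x gy ν c) =O[𝓝 0] id := by
  obtain ⟨M, hM⟩ := isCompact_Icc.exists_bound_of_continuousOn hx
  exact isBigO_integral_exp_mul_mul_sub (hx.aestronglyMeasurable measurableSet_Icc)
    (ae_restrict_of_forall_mem measurableSet_Icc hM) hgy.ofReal c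

theorem continuous_expDoubleIntegral [SFinite ν] (hx : ContinuousOn x (Icc 0 1))
    (hgy : Integrable gy (ν.restrict (Icc 0 1))) (k : ℤ) :
    Continuous (expDoubleIntegral x gy ν k) := by
  obtain ⟨M, hM⟩ := isCompact_Icc.exists_bound_of_continuousOn hx
  have hxm : AEStronglyMeasurable x (ν.restrict (Icc 0 1)) :=
    hx.aestronglyMeasurable measurableSet_Icc
  have hx₁ : AEStronglyMeasurable (fun r : ℝ × ℝ => x r.1) ((ν.prod ν).restrict openSimplex) :=
    hxm.comp_fst.mono_measure (restrict_openSimplex_le ν)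
  have hx₂ : AEStronglyMeasurable (fun r : ℝ × ℝ => x r.2) ((ν.prod ν).restrict openSimplex) :=
    hxm.comp_snd.mono_measure (restrict_openSimplex_le ν)
  have hM₁₂ : ∀ᵐ r ∂(ν.prod ν).restrict openSimplex, |x r.2 - x r.1| ≤ M + M :=
    ae_restrict_of_forall_mem measurableSet_openSimplex fun r hr =>
      (abs_sub _ _).trans (add_le_add (hM _ (openSimplex_subset_Icc_prod hr).2)
        (hM _ (openSimplex_subset_Icc_prod hr).1))
  have hM₂₁ : ∀ᵐ r ∂(ν.prod ν).restrict openSimplex, |x r.1 - x r.2| ≤ M + M :=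
    hM₁₂.mono fun r h => (abs_sub_comm _ _).trans_le h
  have hphase (i : ℝ × ℝ → ℝ) (hi : AEStronglyMeasurable i ((ν.prod ν).restrict openSimplex)) :
      Integrable (fun r => exp (2 * k * Real.pi * I * i r) * ((gy r.1 : ℂ) * gy r.2))
        ((ν.prod ν).restrict openSimplex) :=
    ((hgy.ofReal.mul_prod hgy.ofReal).mono_measure (restrict_openSimplex_le ν)).bdd_mul (c := 1)
      (by fun_prop) (ae_of_all _ fun r => by simp [norm_exp])
  have hF₁ := continuous_integral_exp_mul_mul (hx₂.sub hx₁) hM₁₂ (hphase _ hx₁)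
  have hF₂ := continuous_integral_exp_mul_mul (hx₁.sub hx₂) hM₂₁ (hphase _ hx₂)
  -- `φ(b) = ∫ e^{b (x₂ - x₁)} e^{2kπi x₁} dy dy - ∫ e^{b (x₁ - x₂)} e^{2kπi x₂} dy dy`
  convert hF₁.sub hF₂ using 1
  ext b
  rw [expDoubleIntegral, Pi.sub_apply,
    ← integral_sub (integrable_exp_mul_mul (hx₂.sub hx₁) hM₁₂ (hphase _ hx₁) b)
      (integrable_exp_mul_mul (hx₁.sub hx₂) hM₂₁ (hphase _ hx₂) b)]
  congr 1 with r
  simp only [Pi.sub_apply, exp_add]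
  push_cast
  ring

end Path

theorem second_order_integral_identity_general
    (x : ℝ → ℝ)
    (hx : ContinuousOn x (Icc 0 1))
    (ν : Measure ℝ) [IsFiniteMeasure ν] (gy : ℝ → ℝ)
    (hgy : Integrable gy (ν.restrict (Icc 0 1)))
    (h2 : ∀ (k : ℤ), k ≠ 0 → ∀ b : ℂ,
      (1 - Complex.cosh b) *
        (∫ r in {q : ℝ × ℝ | 0 < q.1 ∧ q.1 < q.2 ∧ q.2 < 1},
            (Complex.exp (2 * k * Real.pi * Complex.I * (x r.1)
                  + b * ((x r.2 : ℂ) - (x r.1 : ℂ)))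
              - Complex.exp (2 * k * Real.pi * Complex.I * (x r.2)
                  + b * ((x r.1 : ℂ) - (x r.2 : ℂ))))
              * (gy r.1 : ℂ) * (gy r.2 : ℂ) ∂(ν.prod ν))
      + Complex.sinh b *
          (∫ t in Icc (0 : ℝ) 1, Complex.exp (b * (x t : ℂ)) * (gy t : ℂ) ∂ν) *
          (∫ t in Icc (0 : ℝ) 1,
            Complex.exp ((2 * k * Real.pi * Complex.I - b) * (x t : ℂ)) * (gy t : ℂ) ∂ν)
      = 0)
    (h1 : ∀ (k : ℤ), k ≠ 0 →
      ∫ t in Icc (0 : ℝ) 1,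
        Complex.exp (2 * k * Real.pi * Complex.I * (x t)) * (gy t : ℂ) ∂ν = 0) :
    ∀ (p q : ℤ), p ≠ 0 → q ≠ 0 → p + q ≠ 0 →
      ∫ r in {q : ℝ × ℝ | 0 < q.1 ∧ q.1 < q.2 ∧ q.2 < 1},
          (Complex.exp (2 * Real.pi * Complex.I * (p * (x r.1) + q * (x r.2)))
            - Complex.exp (2 * Real.pi * Complex.I * (p * (x r.2) + q * (x r.1))))
            * (gy r.1 : ℂ) * (gy r.2 : ℂ) ∂(ν.prod ν) = 0 := by
  intro p q hp hq hpq
  set b₀ : ℂ := 2 * q * Real.pi * I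
  set c₀ : ℂ := 2 * p * Real.pi * I
  have hφψ (b : ℂ) : (1 - cosh b) * expDoubleIntegral x gy ν (p + q) b
      + sinh b * expLineIntegral x gy ν b
        * expLineIntegral x gy ν (2 * ((p + q : ℤ) : ℂ) * Real.pi * I - b) = 0 :=
    h2 (p + q) hpq b
  have hYb₀ : expLineIntegral x gy ν b₀ = 0 := h1 q hq
  have hYc₀ : expLineIntegral x gy ν c₀ = 0 := h1 p hp
  have hA := (isBigO_expLineIntegral_sub hx hgy b₀).comp_tendsto
    (continuous_ofReal.tendsto' 0 0 ofReal_zero)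
  have hB := isBigO_neg_right.1 <| (isBigO_expLineIntegral_sub hx hgy c₀).comp_tendsto
    (continuous_ofReal.neg.tendsto' 0 0 (by simp))
  have hφ : ContinuousAt (fun ε : ℝ => expDoubleIntegral x gy ν (p + q) (b₀ + ε)) 0 :=
    ((continuous_expDoubleIntegral hx hgy _).comp (by fun_prop)).continuousAt
  have hperiod (ε : ℂ) : cosh (b₀ + ε) = cosh ε ∧ sinh (b₀ + ε) = sinh ε := by
    rw [show b₀ + ε = q * (2 * Real.pi * I) + ε by ring]
    exact ⟨cosh_int_mul_two_pi_mul_I_add q ε, sinh_int_mul_two_pi_mul_I_add q ε⟩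
  have key := eq_zero_of_cosh_sub_one_mul_eq_sinh_mul hφ hA hB fun ε => by
    have h := hφψ (b₀ + ε)
    rw [(hperiod ε).1, (hperiod ε).2,
      show 2 * ((p + q : ℤ) : ℂ) * Real.pi * I - (b₀ + ε) = c₀ + -ε by push_cast; ring] at h
    simp only [Function.comp_apply, hYb₀, hYc₀, sub_zero]
    linear_combination -h
  convert key using 1
  simp only [expDoubleIntegral, ofReal_zero, add_zero, b₀]
  congr 1 with r
  push_cast
  ring_nf

/-- Let `γ = (x,y)` be a continuous BV path on `[0,1]` with
`x₀ = y₀ = 0`, `x₁ = 1` (`dy` encoded by a finite measure `ν` with density `gy`), and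
suppose that for every nonzero integer `k` and every `b ∈ ℂ`:
`(1 − cosh b)∫∫_{0<s<t<1}(e^{2kπi x_s + b(x_t−x_s)} − e^{2kπi x_t + b(x_s−x_t)}) dy_s dy_t
 + (sinh b)(∫₀¹ e^{b x_s} dy_s)(∫₀¹ e^{(2kπi−b)x_s} dy_s) = 0`,
and also `∫₀¹ e^{2kπi x_t} dy_t = 0` for all `k ≠ 0`.  Then for all nonzero integers
`p, q` with `p + q ≠ 0`:
`∫∫_{0<s<t<1}(e^{2πi(p x_s + q x_t)} − e^{2πi(p x_t + q x_s)}) dy_s dy_t = 0`. -/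
theorem second_order_integral_identity
    (x y : ℝ → ℝ)
    (hx : ContinuousOn x (Icc 0 1)) (hy : ContinuousOn y (Icc 0 1))
    (hx0 : x 0 = 0) (hy0 : y 0 = 0) (hx1 : x 1 = 1)
    (ν : Measure ℝ) [IsFiniteMeasure ν] (gy : ℝ → ℝ)
    (hgy : Integrable gy (ν.restrict (Icc 0 1)))
    (hlink : ∀ a b : ℝ, 0 ≤ a → a ≤ b → b ≤ 1 →
      ∫ t in Icc a b, gy t ∂ν = y b - y a)
    (h2 : ∀ (k : ℤ), k ≠ 0 → ∀ b : ℂ,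
      (1 - Complex.cosh b) *
        (∫ r in {q : ℝ × ℝ | 0 < q.1 ∧ q.1 < q.2 ∧ q.2 < 1},
            (Complex.exp (2 * k * Real.pi * Complex.I * (x r.1)
                  + b * ((x r.2 : ℂ) - (x r.1 : ℂ)))
              - Complex.exp (2 * k * Real.pi * Complex.I * (x r.2)
                  + b * ((x r.1 : ℂ) - (x r.2 : ℂ))))
              * (gy r.1 : ℂ) * (gy r.2 : ℂ) ∂(ν.prod ν))
      + Complex.sinh b *
          (∫ t in Icc (0 : ℝ) 1, Complex.exp (b * (x t : ℂ)) * (gy t : ℂ) ∂ν) *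
          (∫ t in Icc (0 : ℝ) 1,
            Complex.exp ((2 * k * Real.pi * Complex.I - b) * (x t : ℂ)) * (gy t : ℂ) ∂ν)
      = 0)
    (h1 : ∀ (k : ℤ), k ≠ 0 →
      ∫ t in Icc (0 : ℝ) 1,
        Complex.exp (2 * k * Real.pi * Complex.I * (x t)) * (gy t : ℂ) ∂ν = 0) :
    ∀ (p q : ℤ), p ≠ 0 → q ≠ 0 → p + q ≠ 0 →
      ∫ r in {q : ℝ × ℝ | 0 < q.1 ∧ q.1 < q.2 ∧ q.2 < 1},
          (Complex.exp (2 * Real.pi * Complex.I * (p * (x r.1) + q * (x r.2)))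
            - Complex.exp (2 * Real.pi * Complex.I * (p * (x r.2) + q * (x r.1))))
            * (gy r.1 : ℂ) * (gy r.2 : ℂ) ∂(ν.prod ν) = 0 :=
  second_order_integral_identity_general x hx ν gy hgy h2 h1
end

section
/- For any word J = (j₁, …, j_m) with m ≥ 2, the iterated Lie bracket e_{[J]} := [e_{j₁}, [e_{j₂}, …, [e_{j_{m−1}}, e_{j_m}]…]] in the tensor algebra satisfies e_{[J]} = Σ_{K ⊆ (1,…,m−2)} (−1)^{|K|} e_{J∖(J_K, j_{m−1}, j_m)} ⊗ [e_{j_{m−1}}, e_{j_m}] ⊗ e_{reverse(J_K)}, where the sum is over all (possibly empty) ordered subwords K of (1,…,m−2), J_K is the corresponding subword of J, J∖(J_K, j_{m−1}, j_m) is the complementary subword, and e_{(k₁,…,k_r)} := e_{k₁} ⊗ ⋯ ⊗ e_{k_r} with e_∅ := 1. -/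
/-!
Both sides satisfy the recursion `X (j :: l) = [e_j, X l]`. For the right-nested bracket this
is its definition. For the sum, split the subsets `K` of positions of `j :: l` according to
whether they contain the first position: those that do not put `e_j` in front of the
complementary word, those that do put it at the end of the reversed subword with an extra sign,
which is exactly `e_j X - X e_j`.
-/

noncomputable section

variable {d : ℕ}

/-- The iterated (right-nested) Lie bracket `[e_{j₁},[e_{j₂},…,[e_{j_{m−1}}, e_{j_m}]…]]`
of the generators indexed by a word, inside the tensor (free) algebra. -/
def lieWord : List (Fin d) → FreeAlgebra ℂ (Fin d)
  | [] => 0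
  | [j] => FreeAlgebra.ι ℂ j
  | j :: l => FreeAlgebra.ι ℂ j * lieWord l - lieWord l * FreeAlgebra.ι ℂ j

/-- The product `e_{k₁} ⊗ ⋯ ⊗ e_{k_r}` of the generators indexed by a word
(`e_∅ = 1`). -/
def wordProd (l : List (Fin d)) : FreeAlgebra ℂ (Fin d) :=
  (l.map (FreeAlgebra.ι ℂ)).prod

/-- The subword of `l` indexed by a set `K` of positions, in increasing order. -/
def subword (l : List (Fin d)) (K : Finset (Fin l.length)) : List (Fin d) :=
  (K.sort (· ≤ ·)).map l.get

open Finset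

theorem Fin.sum_finset_succ {M : Type*} [AddCommMonoid M] {n : ℕ}
    (f : Finset (Fin (n + 1)) → M) :
    ∑ K, f K = ∑ K : Finset (Fin n), f (K.map (Fin.succEmb n))
      + ∑ K : Finset (Fin n), f (insert 0 (K.map (Fin.succEmb n))) := by
  rw [← powerset_univ, Fin.univ_succ, cons_eq_insert, sum_powerset_insert (by simp)]
  simp only [map_eq_image, powerset_image, powerset_univ]
  rw [sum_image, sum_image] <;> simp [(image_injective (Fin.succ_injective n)).injOn]

theorem Fin.sort_map_succEmb {n : ℕ} (K : Finset (Fin n)) :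
    (K.map (Fin.succEmb n)).sort (· ≤ ·) = (K.sort (· ≤ ·)).map Fin.succ :=
  (Fin.strictMono_succ.strictMonoOn _).map_finsetSort.symm

theorem Fin.zero_notMem_map_succEmb {n : ℕ} (K : Finset (Fin n)) :
    0 ∉ K.map (Fin.succEmb n) := by
  simp [Fin.succ_ne_zero]

theorem Fin.sort_insert_zero_map_succEmb {n : ℕ} (K : Finset (Fin n)) :
    (insert 0 (K.map (Fin.succEmb n))).sort (· ≤ ·)
      = 0 :: (K.sort (· ≤ ·)).map Fin.succ := by
  rw [sort_insert _ (fun b _ => Fin.zero_le b) (by simp), Fin.sort_map_succEmb]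

theorem Fin.compl_map_succEmb {n : ℕ} (K : Finset (Fin n)) :
    (K.map (Fin.succEmb n))ᶜ = insert 0 (Kᶜ.map (Fin.succEmb n)) := by
  ext i
  cases i using Fin.cases <;> simp [Fin.succ_ne_zero]

theorem Fin.compl_insert_zero_map_succEmb {n : ℕ} (K : Finset (Fin n)) :
    (insert 0 (K.map (Fin.succEmb n)))ᶜ = Kᶜ.map (Fin.succEmb n) := by
  ext i
  cases i using Fin.cases <;> simp [Fin.succ_ne_zero]

section Subword

variable (j : Fin d) (l : List (Fin d)) (K : Finset (Fin l.length))

theorem subword_cons_map_succEmb :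
    subword (j :: l) (K.map (Fin.succEmb _) : Finset (Fin (l.length + 1))) = subword l K := by
  simp [subword, Fin.sort_map_succEmb]

theorem subword_cons_insert_zero :
    subword (j :: l) (insert 0 (K.map (Fin.succEmb _)) : Finset (Fin (l.length + 1)))
      = j :: subword l K := by
  simp [subword, Fin.sort_insert_zero_map_succEmb]

end Subword

theorem wordProd_cons (j : Fin d) (l : List (Fin d)) :
    wordProd (j :: l) = FreeAlgebra.ι ℂ j * wordProd l := by
  simp [wordProd]

theorem wordProd_concat (l : List (Fin d)) (j : Fin d) :
    wordProd (l ++ [j]) = wordProd l * FreeAlgebra.ι ℂ j := by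
  simp [wordProd]

theorem lieWord_cons (j : Fin d) {l : List (Fin d)} (hl : l ≠ []) :
    lieWord (j :: l) = FreeAlgebra.ι ℂ j * lieWord l - lieWord l * FreeAlgebra.ι ℂ j := by
  obtain ⟨i, l, rfl⟩ := List.exists_cons_of_ne_nil hl
  rfl

def adWord (l : List (Fin d)) (B : FreeAlgebra ℂ (Fin d)) : FreeAlgebra ℂ (Fin d) :=
  l.foldr (fun j x => FreeAlgebra.ι ℂ j * x - x * FreeAlgebra.ι ℂ j) B

theorem adWord_cons (j : Fin d) (l : List (Fin d)) (B : FreeAlgebra ℂ (Fin d)) :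
    adWord (j :: l) B = FreeAlgebra.ι ℂ j * adWord l B - adWord l B * FreeAlgebra.ι ℂ j :=
  rfl

theorem lieWord_append {L : List (Fin d)} (l : List (Fin d)) (hL : L ≠ []) :
    lieWord (l ++ L) = adWord l (lieWord L) := by
  induction l with
  | nil => rfl
  | cons j l ih => rw [List.cons_append, lieWord_cons j (by simp [hL]), ih, adWord_cons]

theorem adWord_eq_sum (l : List (Fin d)) (B : FreeAlgebra ℂ (Fin d)) :
    adWord l B = ∑ K : Finset (Fin l.length), ((-1 : ℂ) ^ K.card) •
      (wordProd (subword l Kᶜ) * B * wordProd (subword l K).reverse) := by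
  induction l with
  | nil => simp [adWord, subword, wordProd, Subsingleton.elim _ (∅ : Finset (Fin 0))]
  | cons j l ih =>
    refine Eq.trans ?_ (Fin.sum_finset_succ (n := l.length) _).symm
    simp only [card_map, card_insert_of_notMem (Fin.zero_notMem_map_succEmb _),
      Fin.compl_map_succEmb, Fin.compl_insert_zero_map_succEmb, subword_cons_map_succEmb,
      subword_cons_insert_zero, List.reverse_cons, wordProd_cons, wordProd_concat]
    rw [adWord_cons, ih, mul_sum, sum_mul, sub_eq_add_neg, ← sum_neg_distrib]
    congr 1 <;> refine sum_congr rfl fun K _ => ?_ <;>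
      simp only [pow_succ, mul_neg_one, neg_smul, mul_smul_comm, smul_mul_assoc, mul_assoc]

/-- `J = l ++ [a, b]`: `l` is the prefix `(j₁, …, j_{m−2})`, and `K` runs over its
positions. -/
theorem lie_monomial_expansion (l : List (Fin d)) (a b : Fin d) :
    lieWord (l ++ [a, b])
      = ∑ K : Finset (Fin l.length),
          ((-1 : ℂ) ^ K.card) •
            (wordProd (subword l Kᶜ) *
              (FreeAlgebra.ι ℂ a * FreeAlgebra.ι ℂ b
                - FreeAlgebra.ι ℂ b * FreeAlgebra.ι ℂ a) *
              wordProd ((subword l K).reverse)) := by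
  rw [lieWord_append l (List.cons_ne_nil a [b]), adWord_eq_sum]
  rfl

end
end
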